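/- For all positive reals a ≠ b, the mean λ_0(a,b) = (a log a + b log b - (a+b) log((a+b)/2)) / (2 log((a+b)/2) - log a - log b) satisfies G(a,b) ≤ λ_0(a,b) ≤ L(a,b), where G(a,b) = √(ab) and L(a,b) = (b-a)/(log b - log a). -/

import Mathlib

/-!
Write `a = m(1-y)`, `b = m(1+y)` with `m = (a+b)/2`, `0 < y < 1`, and put
`S = log(1+y) - log(1-y) = 2 artanh y`, `Z = -log(1-y²)`. Then `λ₀ = m(yS - Z)/Z` and
`L = 2my/S`, so `λ₀ ≤ L` amounts to `yS² ≤ Z(2y+S)`. The difference `Z - yS²/(2y+S)`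
vanishes at `0` and has derivative `(8y³ - (1-y²)S³)/((1-y²)(2y+S)²)`, which is nonnegative
by Lazarević's inequality `(sinh t / t)³ ≥ cosh t`, i.e. `S ≤ 2y(1-y²)^(-1/3)`; the latter
holds because the difference of its two sides has derivative of the sign of
`(1 - y²/3)³ - (1 - y²) ≥ 0`.

For `G ≤ λ₀` put `a = u²`, `b = v²`: then `λ₀ - G` is a positive multiple of
`2u log u + 2v log v - (u+v) log((u²+v²)/2)`, and with `u = m(1-w)`, `v = m(1+w)` this is
`2m((1+w) log(1+w) + (1-w) log(1-w) - log(1+w²))`, whose derivative in `w ≥ 0` is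
`S(w) - 2w/(1+w²) ≥ 2w - 2w/(1+w²) ≥ 0`.
-/

open Real Set Filter Topology

/- `logRatio y = 2 artanh y` and `logDefect y = -log (1 - y²)`; for `a = m(1-y)`, `b = m(1+y)`
they are `log b - log a` and `2 log m - log a - log b`. -/
noncomputable def logRatio (y : ℝ) : ℝ := log (1 + y) - log (1 - y)

noncomputable def logDefect (y : ℝ) : ℝ := -(log (1 + y) + log (1 - y))

theorem monotoneOn_Ico_of_hasDerivAt_nonneg {f f' : ℝ → ℝ} {a b : ℝ}
    (hfa : ContinuousWithinAt f (Ico a b) a) (hf : ∀ x ∈ Ioo a b, HasDerivAt f (f' x) x)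
    (hf' : ∀ x ∈ Ioo a b, 0 ≤ f' x) : MonotoneOn f (Ico a b) := by
  refine monotoneOn_of_hasDerivWithinAt_nonneg (convex_Ico a b) (fun x hx => ?_)
    (fun x hx => ?_) (by simpa only [interior_Ico] using hf')
  · rcases hx.1.eq_or_lt with rfl | hax
    · exact hfa
    · exact (hf x ⟨hax, hx.2⟩).continuousAt.continuousWithinAt
  · rw [interior_Ico] at hx ⊢
    exact (hf x hx).hasDerivWithinAt

theorem hasDerivAt_logRatio {y : ℝ} (h₁ : -1 < y) (h₂ : y < 1) :
    HasDerivAt logRatio (2 / (1 - y ^ 2)) y := by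
  have hp := ((hasDerivAt_id' y).const_add 1).log (by linarith)
  have hm := ((hasDerivAt_id' y).const_sub 1).log (by linarith)
  refine (hp.sub hm).congr_deriv ?_
  have : 1 - y ≠ 0 := by linarith
  have : 1 + y ≠ 0 := by linarith
  have : 1 - y ^ 2 ≠ 0 := by nlinarith
  field_simp
  ring

theorem hasDerivAt_logDefect {y : ℝ} (h₁ : -1 < y) (h₂ : y < 1) :
    HasDerivAt logDefect (2 * y / (1 - y ^ 2)) y := by
  have hp := ((hasDerivAt_id' y).const_add 1).log (by linarith)
  have hm := ((hasDerivAt_id' y).const_sub 1).log (by linarith)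
  refine (hp.add hm).neg.congr_deriv ?_
  have : 1 - y ≠ 0 := by linarith
  have : 1 + y ≠ 0 := by linarith
  have : 1 - y ^ 2 ≠ 0 := by nlinarith
  field_simp
  ring

theorem logRatio_neg (y : ℝ) : logRatio (-y) = -logRatio y := by
  simp only [logRatio, sub_neg_eq_add, ← sub_eq_add_neg]
  ring

theorem logDefect_neg (y : ℝ) : logDefect (-y) = logDefect y := by
  simp only [logDefect, sub_neg_eq_add, ← sub_eq_add_neg]
  ring

theorem exp_logDefect {y : ℝ} (h₁ : -1 < y) (h₂ : y < 1) :
    exp (logDefect y) = (1 - y ^ 2)⁻¹ := by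
  rw [logDefect, ← log_mul (by linarith) (by linarith), exp_neg, exp_log (by nlinarith)]
  ring

@[simp] theorem logRatio_zero : logRatio 0 = 0 := by simp [logRatio]

@[simp] theorem logDefect_zero : logDefect 0 = 0 := by simp [logDefect]

theorem two_mul_le_logRatio {y : ℝ} (h₀ : 0 ≤ y) (h₁ : y < 1) : 2 * y ≤ logRatio y := by
  have hs := hasSum_log_sub_log_of_abs_lt_one (abs_lt.2 ⟨by linarith, h₁⟩)
  simpa [logRatio] using le_hasSum hs 0 (fun k _ => by positivity)

/- Lazarević's inequality `(sinh t / t)³ ≥ cosh t` at `y = tanh t`, with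
`exp (logDefect y / 3) = (1 - y²)^(-1/3)`. -/
theorem logRatio_le_two_mul_mul_exp {y : ℝ} (h₀ : 0 ≤ y) (h₁ : y < 1) :
    logRatio y ≤ 2 * y * exp (logDefect y / 3) := by
  have hcube : ∀ x ∈ Ioo (-1 : ℝ) 1, 3 ≤ exp (logDefect x / 3) * (3 - x ^ 2) := by
    intro x ⟨hx₁, hx₂⟩
    have hx : 0 < 1 - x ^ 2 := by nlinarith
    refine le_of_pow_le_pow_left₀ three_ne_zero (by nlinarith [exp_pos (logDefect x / 3)]) ?_
    rw [mul_pow, ← exp_nat_mul, Nat.cast_ofNat, mul_div_cancel₀ _ three_ne_zero,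
      exp_logDefect hx₁ hx₂, inv_mul_eq_div, le_div_iff₀ hx]
    nlinarith [pow_nonneg (sq_nonneg x) 2, sq_nonneg x]
  have hderiv : ∀ x ∈ Ioo (-1 : ℝ) 1,
      HasDerivAt (fun x => 2 * x * exp (logDefect x / 3) - logRatio x)
        (2 * (exp (logDefect x / 3) * (3 - x ^ 2) - 3) / (3 * (1 - x ^ 2))) x := by
    intro x ⟨hx₁, hx₂⟩
    refine ((((hasDerivAt_id' x).const_mul 2).mul
      ((hasDerivAt_logDefect hx₁ hx₂).div_const 3).exp).sub
      (hasDerivAt_logRatio hx₁ hx₂)).congr_deriv ?_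
    have : 1 - x ^ 2 ≠ 0 := by nlinarith
    field_simp
    ring
  have hmono := monotoneOn_Ico_of_hasDerivAt_nonneg
    (hderiv 0 ⟨by norm_num, by norm_num⟩).continuousAt.continuousWithinAt
    (fun x hx => hderiv x ⟨by linarith [hx.1], hx.2⟩)
    (fun x hx => div_nonneg (by linarith [hcube x ⟨by linarith [hx.1], hx.2⟩])
      (by nlinarith [hx.1, hx.2]))
  have h := hmono ⟨le_rfl, one_pos⟩ ⟨h₀, h₁⟩ h₀
  simp only [mul_zero, zero_mul, logRatio_zero, sub_zero] at h
  linarith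

theorem logRatio_pow_three_mul_le {y : ℝ} (h₀ : 0 ≤ y) (h₁ : y < 1) :
    logRatio y ^ 3 * (1 - y ^ 2) ≤ 8 * y ^ 3 := by
  have hy : 0 < 1 - y ^ 2 := by nlinarith
  have h := pow_le_pow_left₀ (by linarith [two_mul_le_logRatio h₀ h₁])
    (logRatio_le_two_mul_mul_exp h₀ h₁) 3
  rw [mul_pow, ← exp_nat_mul, Nat.cast_ofNat, mul_div_cancel₀ _ three_ne_zero,
    exp_logDefect (by linarith) h₁, ← div_eq_mul_inv, le_div_iff₀ hy] at h
  linarith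

theorem mul_logRatio_sq_le {y : ℝ} (h₀ : 0 < y) (h₁ : y < 1) :
    y * logRatio y ^ 2 ≤ logDefect y * (2 * y + logRatio y) := by
  set g : ℝ → ℝ := fun x => x * logRatio x ^ 2 / (2 * x + logRatio x)
  have hbound : ∀ x ∈ Ico (0 : ℝ) 1, 0 ≤ g x ∧ g x ≤ logRatio x ^ 2 / 4 := by
    intro x ⟨hx₀, hx₁⟩
    have hS := two_mul_le_logRatio hx₀ hx₁
    refine ⟨div_nonneg (by positivity) (by linarith), ?_⟩
    rcases hx₀.eq_or_lt with rfl | hx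
    · simp [g]
    · rw [div_le_div_iff₀ (by linarith) four_pos]
      nlinarith [mul_nonneg (sq_nonneg (logRatio x)) (sub_nonneg.2 hS)]
  -- `g` is `0 / 0` at `0`; the squeeze by `logRatio² / 4` makes it continuous there.
  have hcont : ContinuousWithinAt (fun x => logDefect x - g x) (Ico 0 1) 0 := by
    refine ((hasDerivAt_logDefect (by norm_num) one_pos).continuousAt.continuousWithinAt).sub ?_
    have hS : Tendsto (fun x => logRatio x ^ 2 / 4) (𝓝[Ico 0 1] 0) (𝓝 0) := by
      simpa using (((hasDerivAt_logRatio (by norm_num) one_pos).continuousAt.pow 2).div_const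
        4).tendsto.mono_left nhdsWithin_le_nhds
    simpa [ContinuousWithinAt, g] using squeeze_zero'
      (eventually_nhdsWithin_of_forall fun x hx => (hbound x hx).1)
      (eventually_nhdsWithin_of_forall fun x hx => (hbound x hx).2) hS
  have hderiv : ∀ x ∈ Ioo (0 : ℝ) 1, HasDerivAt (fun x => logDefect x - g x)
      ((8 * x ^ 3 - logRatio x ^ 3 * (1 - x ^ 2)) /
        ((1 - x ^ 2) * (2 * x + logRatio x) ^ 2)) x := by
    intro x ⟨hx₀, hx₁⟩
    have hpos : 0 < 2 * x + logRatio x := by linarith [two_mul_le_logRatio hx₀.le hx₁]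
    have hS := hasDerivAt_logRatio (by linarith) hx₁
    refine ((hasDerivAt_logDefect (by linarith) hx₁).sub
      (((hasDerivAt_id' x).mul (hS.pow 2)).div (((hasDerivAt_id' x).const_mul 2).add hS)
        hpos.ne')).congr_deriv ?_
    have : 1 - x ^ 2 ≠ 0 := by nlinarith
    simp only [Pi.add_apply, Pi.mul_apply, Pi.pow_apply]
    field_simp
    ring
  have hmono := monotoneOn_Ico_of_hasDerivAt_nonneg hcont hderiv fun x ⟨hx₀, hx₁⟩ =>
    div_nonneg (by linarith [logRatio_pow_three_mul_le hx₀.le hx₁])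
      (mul_nonneg (by nlinarith) (sq_nonneg _))
  have h := hmono ⟨le_rfl, one_pos⟩ ⟨h₀.le, h₁⟩ h₀.le
  have hpos : 0 < 2 * y + logRatio y := by linarith [two_mul_le_logRatio h₀.le h₁]
  simp only [g, logDefect_zero, zero_mul, zero_div, sub_zero, sub_nonneg,
    div_le_iff₀ hpos] at h
  exact h

theorem log_one_add_sq_le {w : ℝ} (h₁ : -1 < w) (h₂ : w < 1) :
    log (1 + w ^ 2) ≤ w * logRatio w - logDefect w := by
  wlog hw : 0 ≤ w generalizing w
  · simpa [logRatio_neg, logDefect_neg] using this (w := -w) (by linarith) (by linarith)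
      (by linarith)
  have hderiv : ∀ x ∈ Ioo (-1 : ℝ) 1,
      HasDerivAt (fun x => x * logRatio x - logDefect x - log (1 + x ^ 2))
        (logRatio x - 2 * x / (1 + x ^ 2)) x := by
    intro x ⟨hx₁, hx₂⟩
    refine ((((hasDerivAt_id' x).mul (hasDerivAt_logRatio hx₁ hx₂)).sub
      (hasDerivAt_logDefect hx₁ hx₂)).sub
      (((hasDerivAt_pow 2 x).const_add 1).log (by positivity))).congr_deriv ?_
    have : 1 - x ^ 2 ≠ 0 := by nlinarith
    field_simp
    ring
  have hmono := monotoneOn_Ico_of_hasDerivAt_nonneg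
    (hderiv 0 ⟨by norm_num, by norm_num⟩).continuousAt.continuousWithinAt
    (fun x hx => hderiv x ⟨by linarith [hx.1], hx.2⟩) fun x ⟨hx₀, hx₁⟩ => by
      have hS := two_mul_le_logRatio hx₀.le hx₁
      have : 2 * x / (1 + x ^ 2) ≤ 2 * x :=
        div_le_self (by linarith) (by nlinarith)
      linarith
  have h := hmono ⟨le_rfl, one_pos⟩ ⟨hw, h₂⟩ hw
  simp only [zero_mul, logDefect_zero, sub_zero, ne_eq, OfNat.ofNat_ne_zero,
    not_false_eq_true, zero_pow, add_zero, log_one, sub_nonneg] at h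
  linarith

theorem exists_eq_mul_one_sub_and_eq_mul_one_add {p q : ℝ} (hp : 0 < p) (hq : 0 < q) :
    ∃ m w, 0 < m ∧ -1 < w ∧ w < 1 ∧ p = m * (1 - w) ∧ q = m * (1 + w) := by
  refine ⟨(p + q) / 2, (q - p) / (p + q), by positivity, ?_, ?_, ?_, ?_⟩
  · rw [lt_div_iff₀ (by positivity)]; linarith
  · rw [div_lt_iff₀ (by positivity)]; linarith
  · field_simp; ring
  · field_simp; ring

theorem add_mul_log_sq_add_sq_div_two_le {u v : ℝ} (hu : 0 < u) (hv : 0 < v) :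
    (u + v) * log ((u ^ 2 + v ^ 2) / 2) ≤ 2 * u * log u + 2 * v * log v := by
  obtain ⟨m, w, hm, hw₁, hw₂, rfl, rfl⟩ := exists_eq_mul_one_sub_and_eq_mul_one_add hu hv
  have hw := mul_le_mul_of_nonneg_left (log_one_add_sq_le hw₁ hw₂) (by positivity : 0 ≤ 2 * m)
  rw [show ((m * (1 - w)) ^ 2 + (m * (1 + w)) ^ 2) / 2 = m ^ 2 * (1 + w ^ 2) by ring,
    log_mul (by positivity) (by positivity), log_pow, log_mul hm.ne' (by linarith),
    log_mul hm.ne' (by linarith)]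
  simp only [logRatio, logDefect] at hw
  push_cast
  linarith

noncomputable def lambdaZero (a b : ℝ) : ℝ :=
  (a * log a + b * log b - (a + b) * log ((a + b) / 2)) / (2 * log ((a + b) / 2) - log a - log b)

noncomputable def logMean (a b : ℝ) : ℝ := (b - a) / (log b - log a)

theorem lambdaZero_comm (a b : ℝ) : lambdaZero a b = lambdaZero b a := by
  rw [lambdaZero, lambdaZero, add_comm b a]
  ring

theorem logMean_comm (a b : ℝ) : logMean a b = logMean b a := by
  rw [logMean, logMean, ← neg_div_neg_eq, neg_sub, neg_sub]

theorem sqrt_mul_le_lambdaZero {a b : ℝ} (ha : 0 < a) (hb : 0 < b) (hab : a ≠ b) :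
    √(a * b) ≤ lambdaZero a b := by
  obtain ⟨u, hu, rfl⟩ : ∃ u, 0 < u ∧ a = u ^ 2 := ⟨√a, sqrt_pos.2 ha, (sq_sqrt ha.le).symm⟩
  obtain ⟨v, hv, rfl⟩ : ∃ v, 0 < v ∧ b = v ^ 2 := ⟨√b, sqrt_pos.2 hb, (sq_sqrt hb.le).symm⟩
  have huv : u ≠ v := by rintro rfl; exact hab rfl
  rw [lambdaZero, show u ^ 2 * v ^ 2 = (u * v) ^ 2 by ring, sqrt_sq (by positivity), log_pow,
    log_pow]
  have hD : 0 < 2 * log ((u ^ 2 + v ^ 2) / 2) - (2 : ℕ) * log u - (2 : ℕ) * log v := by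
    have := log_lt_log (by positivity) (show u * v < (u ^ 2 + v ^ 2) / 2 by
      nlinarith [sq_pos_of_ne_zero (sub_ne_zero.2 huv)])
    rw [log_mul hu.ne' hv.ne'] at this
    push_cast
    linarith
  rw [le_div_iff₀ hD]
  have := mul_le_mul_of_nonneg_left (add_mul_log_sq_add_sq_div_two_le hu hv)
    (by positivity : 0 ≤ u + v)
  push_cast
  linear_combination this

theorem lambdaZero_le_logMean_of_lt {a b : ℝ} (ha : 0 < a) (hab : a < b) :
    lambdaZero a b ≤ logMean a b := by
  obtain ⟨m, y, hm, hy₁, hy₂, rfl, rfl⟩ :=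
    exists_eq_mul_one_sub_and_eq_mul_one_add ha (ha.trans hab)
  have hy : 0 < y := by nlinarith
  have hS : 0 < logRatio y := by linarith [two_mul_le_logRatio hy.le hy₂]
  have hZ : 0 < logDefect y := by
    rw [← exp_lt_exp, exp_zero, exp_logDefect hy₁ hy₂]
    exact one_lt_inv_iff₀.2 ⟨by nlinarith, by nlinarith⟩
  have h := mul_le_mul_of_nonneg_left (mul_logRatio_sq_le hy hy₂) hm.le
  rw [lambdaZero, logMean, show (m * (1 - y) + m * (1 + y)) / 2 = m by ring,
    log_mul hm.ne' (by linarith), log_mul hm.ne' (by linarith)]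
  simp only [logRatio, logDefect] at hS hZ h
  rw [div_le_div_iff₀ (by linarith) (by linarith)]
  linear_combination h

theorem stmt9 (a b : ℝ) (ha : 0 < a) (hb : 0 < b) (hab : a ≠ b) :
    Real.sqrt (a * b) ≤
      (a * Real.log a + b * Real.log b - (a + b) * Real.log ((a + b) / 2)) /
        (2 * Real.log ((a + b) / 2) - Real.log a - Real.log b) ∧
    (a * Real.log a + b * Real.log b - (a + b) * Real.log ((a + b) / 2)) /
        (2 * Real.log ((a + b) / 2) - Real.log a - Real.log b) ≤
      (b - a) / (Real.log b - Real.log a) := by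
  show √(a * b) ≤ lambdaZero a b ∧ lambdaZero a b ≤ logMean a b
  refine ⟨sqrt_mul_le_lambdaZero ha hb hab, ?_⟩
  rcases hab.lt_or_gt with h | h
  · exact lambdaZero_le_logMean_of_lt ha h
  · rw [lambdaZero_comm, logMean_comm]
    exact lambdaZero_le_logMean_of_lt hb h
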